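/- In a subdirectly irreducible SMMV-algebra (A, τ), every element a satisfies a ≤ τ(a) or τ(a) ≤ a. -/

import Mathlib

/-- An MV-algebra `(A, ⊕, ¬, 0)`. -/
class MV (A : Type*) extends Zero A where
  oplus : A → A → A
  mvneg : A → A
  oplus_assoc : ∀ x y z : A, oplus (oplus x y) z = oplus x (oplus y z)
  oplus_comm : ∀ x y : A, oplus x y = oplus y x
  oplus_zero : ∀ x : A, oplus x 0 = x
  mvneg_mvneg : ∀ x : A, mvneg (mvneg x) = x
  oplus_top : ∀ x : A, oplus x (mvneg 0) = mvneg 0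
  luk : ∀ x y : A, oplus (mvneg (oplus (mvneg x) y)) y = oplus (mvneg (oplus (mvneg y) x)) x

namespace MV

variable {A : Type*} [MV A]

/-- The top element `1 = ¬0`. -/
def top : A := mvneg 0
/-- `x → y := ¬x ⊕ y`. -/
def imp (x y : A) : A := oplus (mvneg x) y
/-- `x ⊙ y := ¬(¬x ⊕ ¬y)`. -/
def odot (x y : A) : A := mvneg (oplus (mvneg x) (mvneg y))
/-- `x ⊖ y := ¬(¬x ⊕ y)`. -/
def ominus (x y : A) : A := mvneg (oplus (mvneg x) y)
/-- Lattice join `x ∨ y := (x → y) → y`. -/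
def mvsup (x y : A) : A := imp (imp x y) y
/-- Lattice meet `x ∧ y := x ⊙ (x → y)`. -/
def mvinf (x y : A) : A := odot x (imp x y)
/-- The lattice order: `x ≤ y` iff `x → y = 1`. -/
def mvle (x y : A) : Prop := imp x y = top
/-- Strict order. -/
def mvlt (x y : A) : Prop := mvle x y ∧ x ≠ y

/-- `(A, τ)` is an SMV-algebra. -/
structure IsSMV (τ : A → A) : Prop where
  map_top : τ top = top
  tau_oplus : ∀ x y : A, τ (oplus x y) = oplus (τ x) (τ (ominus y (odot x y)))
  map_neg : ∀ x : A, τ (mvneg x) = mvneg (τ x)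
  tau_fix : ∀ x y : A, τ (oplus (τ x) (τ y)) = oplus (τ x) (τ y)

/-- `(A, τ)` is a state morphism MV-algebra. -/
def IsSMMV (τ : A → A) : Prop := IsSMV τ ∧ ∀ x y : A, τ (oplus x y) = oplus (τ x) (τ y)

/-- An MV-filter. -/
structure IsFilter (F : Set A) : Prop where
  top_mem : top ∈ F
  mp : ∀ a b : A, a ∈ F → imp a b ∈ F → b ∈ F

/-- A `τ`-filter: an MV-filter closed under `τ`. -/
def IsTauFilter (τ : A → A) (F : Set A) : Prop := IsFilter F ∧ ∀ a ∈ F, τ a ∈ F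

/-- Subdirect irreducibility of an SMV-algebra: there is a minimum nontrivial `τ`-filter. -/
def SubdirIrrSMV (τ : A → A) : Prop :=
  ∃ F : Set A, IsTauFilter τ F ∧ F ≠ {top} ∧
    ∀ G : Set A, IsTauFilter τ G → G ≠ {top} → F ⊆ G

/-- A filter of the subalgebra/subhoop with universe `S`. -/
def IsFilterOn (S F : Set A) : Prop :=
  F ⊆ S ∧ top ∈ F ∧ ∀ a b : A, a ∈ F → b ∈ S → imp a b ∈ F → b ∈ F

/-- Subdirect irreducibility of the subalgebra/subhoop with universe `S`:
there is a minimum nontrivial filter on `S`. -/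
def SubdirIrrOn (S : Set A) : Prop :=
  ∃ F : Set A, IsFilterOn S F ∧ F ≠ {top} ∧
    ∀ G : Set A, IsFilterOn S G → G ≠ {top} → F ⊆ G

/-- The set `F_τ(A) = {a : τ a = 1}`. -/
def tauKernel (τ : A → A) : Set A := {a : A | τ a = top}

/-- Homomorphisms of MV-algebras. -/
structure IsMVHom {A B : Type*} [MV A] [MV B] (f : A → B) : Prop where
  map_oplus : ∀ x y : A, f (oplus x y) = oplus (f x) (f y)
  map_neg : ∀ x : A, f (mvneg x) = mvneg (f x)
  map_zero : f 0 = 0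

end MV

open MV

instance MV.instProd {A B : Type*} [MV A] [MV B] : MV (A × B) where
  oplus x y := (oplus x.1 y.1, oplus x.2 y.2)
  mvneg x := (mvneg x.1, mvneg x.2)
  oplus_assoc x y z := by simp [oplus_assoc]
  oplus_comm x y := by simp [oplus_comm x.1 y.1, oplus_comm x.2 y.2]
  oplus_zero x := by simp [oplus_zero]
  mvneg_mvneg x := by simp [mvneg_mvneg]
  oplus_top x := by simp [oplus_top]
  luk x y := by simp [luk]

instance MV.instPi {I : Type*} {A : I → Type*} [∀ i, MV (A i)] : MV (∀ i, A i) where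
  oplus x y i := oplus (x i) (y i)
  mvneg x i := mvneg (x i)
  oplus_assoc x y z := by funext i; simp [oplus_assoc]
  oplus_comm x y := by funext i; exact oplus_comm _ _
  oplus_zero x := by funext i; exact oplus_zero _
  mvneg_mvneg x := by funext i; exact mvneg_mvneg _
  oplus_top x := by funext i; exact oplus_top _
  luk x y := by funext i; exact luk _ _

/-!
The two residua `a → τ a` and `τ a → a` lie in the `τ`-kernel, because `τ` is an idempotent
endomorphism, and their join is `1` by prelinearity. If neither were `1`, the filters they
generate would be nontrivial `τ`-filters, hence both would contain the minimum nontrivial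
`τ`-filter and so some `m ≠ 1`. Then `(a → τ a)ⁿ ≤ m` and `(τ a → a)ᵏ ≤ m`, while
`u ∨ v = 1` implies `uⁿ ∨ vᵏ = 1`; so `m = 1`, a contradiction.
-/

namespace MV

variable {A : Type*} [MV A]

section Order

lemma zero_oplus (x : A) : oplus 0 x = x := by rw [oplus_comm, oplus_zero]

lemma oplus_top' (x : A) : oplus x top = top := oplus_top x

lemma mvneg_top : (mvneg top : A) = 0 := mvneg_mvneg 0

lemma mvneg_injective : Function.Injective (mvneg : A → A) := fun x y h => by
  rw [← mvneg_mvneg x, h, mvneg_mvneg]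

lemma oplus_left_comm (x y z : A) : oplus x (oplus y z) = oplus y (oplus x z) := by
  rw [← oplus_assoc, oplus_comm x y, oplus_assoc]

lemma mvneg_oplus_self (x : A) : oplus (mvneg x) x = top := by
  have h := luk x (top : A)
  rw [oplus_top', mvneg_top, zero_oplus] at h
  exact h.symm

lemma mvle_refl (x : A) : mvle x x := mvneg_oplus_self x

lemma mvle_top (x : A) : mvle x top := oplus_top' _

lemma eq_top_of_top_mvle {x : A} (h : mvle top x) : x = top := by
  rwa [mvle, imp, mvneg_top, zero_oplus] at h

lemma mvsup_comm (x y : A) : mvsup x y = mvsup y x := luk x y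

lemma mvsup_eq_right {x y : A} (h : mvle x y) : mvsup x y = y := by
  rw [mvsup, h, imp, mvneg_top, zero_oplus]

lemma mvle_mvsup_left (x y : A) : mvle x (mvsup x y) := by
  rw [mvle, imp, mvsup, imp, oplus_left_comm]
  exact mvneg_oplus_self _

lemma mvle_mvsup_right (x y : A) : mvle y (mvsup x y) := by
  rw [mvsup_comm]; exact mvle_mvsup_left y x

lemma mvle_trans {x y z : A} (hxy : mvle x y) (hyz : mvle y z) : mvle x z := by
  rw [mvle, imp, ← mvsup_eq_right hyz, mvsup_comm, mvsup, imp, imp, oplus_left_comm]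
  rw [mvle, imp] at hxy
  rw [hxy, oplus_top']

lemma oplus_mvle_oplus_left {x y : A} (h : mvle x y) (z : A) :
    mvle (oplus z x) (oplus z y) := by
  rw [mvle, imp, ← mvsup_eq_right h, mvsup_comm, mvsup, imp, imp,
    oplus_left_comm z, oplus_left_comm (mvneg (oplus z x)), mvneg_oplus_self, oplus_top']

lemma oplus_mvle_oplus_right {x y : A} (h : mvle x y) (z : A) :
    mvle (oplus x z) (oplus y z) := by
  rw [oplus_comm x z, oplus_comm y z]; exact oplus_mvle_oplus_left h z

lemma mvneg_mvle_mvneg {x y : A} (h : mvle x y) : mvle (mvneg y) (mvneg x) := by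
  rw [mvle, imp, mvneg_mvneg, oplus_comm]; exact h

lemma mvle_of_mvneg_mvle_mvneg {x y : A} (h : mvle (mvneg y) (mvneg x)) : mvle x y := by
  simpa only [mvneg_mvneg] using mvneg_mvle_mvneg h

lemma mvsup_mvle {x y z : A} (hx : mvle x z) (hy : mvle y z) : mvle (mvsup x y) z := by
  have h := oplus_mvle_oplus_right
    (mvneg_mvle_mvneg (oplus_mvle_oplus_right (mvneg_mvle_mvneg hx) y)) y
  change mvle (mvsup x y) (mvsup z y) at h
  rwa [mvsup_comm z y, mvsup_eq_right hy] at h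

end Order

section Odot

lemma mvneg_odot (x y : A) : mvneg (odot x y) = oplus (mvneg x) (mvneg y) :=
  mvneg_mvneg _

lemma odot_comm (x y : A) : odot x y = odot y x := by
  rw [odot, odot, oplus_comm]

lemma odot_assoc (x y z : A) : odot (odot x y) z = odot x (odot y z) := by
  rw [odot, odot, odot, odot, mvneg_mvneg, mvneg_mvneg, oplus_assoc]

lemma odot_top (x : A) : odot x top = x := by
  rw [odot, mvneg_top, oplus_zero, mvneg_mvneg]

lemma top_odot (x : A) : odot top x = x := by rw [odot_comm, odot_top]

lemma odot_mvle_left (x y : A) : mvle (odot x y) x := by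
  rw [mvle, imp, mvneg_odot, oplus_comm (mvneg x), oplus_assoc, mvneg_oplus_self, oplus_top']

lemma odot_mvle_right (x y : A) : mvle (odot x y) y := by
  rw [odot_comm]; exact odot_mvle_left y x

lemma odot_mvle_odot_left {x y : A} (h : mvle x y) (z : A) : mvle (odot x z) (odot y z) := by
  apply mvle_of_mvneg_mvle_mvneg
  rw [mvneg_odot, mvneg_odot]
  exact oplus_mvle_oplus_right (mvneg_mvle_mvneg h) (mvneg z)

lemma odot_mvle_odot_right {x y : A} (h : mvle x y) (z : A) : mvle (odot z x) (odot z y) := by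
  rw [odot_comm z x, odot_comm z y]; exact odot_mvle_odot_left h z

lemma mvneg_mvinf (x y : A) : mvneg (mvinf x y) = mvsup (mvneg x) (mvneg y) := by
  rw [mvinf, mvneg_odot, mvsup, imp, imp, imp, mvneg_mvneg, oplus_comm (mvneg x),
    oplus_comm (mvneg x) y]
  simpa only [mvneg_mvneg] using luk (mvneg y) (mvneg x)

lemma mvinf_mvle_right (x y : A) : mvle (mvinf x y) y := by
  apply mvle_of_mvneg_mvle_mvneg
  rw [mvneg_mvinf]
  exact mvle_mvsup_right _ _

lemma mvinf_eq_right {x y : A} (h : mvle y x) : mvinf x y = y := by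
  apply mvneg_injective
  rw [mvneg_mvinf, mvsup_eq_right (mvneg_mvle_mvneg h)]

lemma odot_mvle_of_mvle_imp {a b c : A} (h : mvle a (imp b c)) : mvle (odot a b) c := by
  refine mvle_trans (odot_mvle_odot_left h b) ?_
  rw [odot_comm]
  exact mvinf_mvle_right b c

lemma mvle_imp_odot (a b : A) : mvle a (imp b (odot b a)) := by
  rw [mvle, imp, imp, odot, ← oplus_assoc, oplus_comm (mvneg a) (mvneg b), oplus_comm]
  exact mvneg_oplus_self _

lemma imp_mvle_imp_right {x y : A} (h : mvle x y) (z : A) : mvle (imp z x) (imp z y) :=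
  oplus_mvle_oplus_left h (mvneg z)

lemma odot_mvsup_mvle (a b c : A) : mvle (odot (mvsup b c) a) (mvsup (odot a b) (odot a c)) := by
  apply odot_mvle_of_mvle_imp
  apply mvsup_mvle
  · exact mvle_trans (mvle_imp_odot b a) (imp_mvle_imp_right (mvle_mvsup_left _ _) a)
  · exact mvle_trans (mvle_imp_odot c a) (imp_mvle_imp_right (mvle_mvsup_right _ _) a)

end Odot

section Prelinearity

lemma mvsup_odot_mvneg (x y : A) : odot (mvsup x y) (mvneg y) = mvneg (imp x y) := by
  have h : oplus (mvneg (oplus (mvneg (imp x y)) y)) y = imp x y := by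
    have h := luk (imp x y) y
    rwa [imp, oplus_left_comm (mvneg y), mvneg_oplus_self, oplus_top', mvneg_top,
      zero_oplus] at h
  apply mvneg_injective
  rw [mvneg_odot, mvneg_mvneg, mvneg_mvneg]
  exact h

lemma mvneg_imp_odot_imp (x y : A) : odot (mvneg (imp x y)) (imp y x) = mvneg (imp x y) := by
  have hyx : imp y x = imp (mvsup x y) x := by
    rw [mvsup_comm, ← mvneg_mvneg (imp y x), ← mvsup_odot_mvneg y x, mvneg_odot, mvneg_mvneg,
      imp]
  calc odot (mvneg (imp x y)) (imp y x)
      = odot (mvneg y) (mvinf (mvsup x y) x) := by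
        rw [← mvsup_odot_mvneg, hyx, odot_comm (mvsup x y), odot_assoc, mvinf]
    _ = mvneg (imp x y) := by
        rw [mvinf_eq_right (mvle_mvsup_left x y), odot_comm, odot, mvneg_mvneg, imp]

lemma mvsup_imp_imp (x y : A) : mvsup (imp x y) (imp y x) = top := by
  have h := congrArg mvneg (mvneg_imp_odot_imp y x)
  rw [odot, mvneg_mvneg, mvneg_mvneg, oplus_comm] at h
  rw [mvsup, imp, imp, h]
  exact mvneg_oplus_self _

lemma mvsup_odot_eq_top {u v w : A} (hv : mvsup u v = top) (hw : mvsup u w = top) :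
    mvsup u (odot v w) = top := by
  have hstart : mvle (odot (mvsup u v) (mvsup u w))
      (mvsup (odot (mvsup u v) u) (odot (mvsup u v) w)) := by
    rw [odot_comm]; exact odot_mvsup_mvle (mvsup u v) u w
  have hu_le : mvle (odot (mvsup u v) u) (mvsup u (odot v w)) :=
    mvle_trans (odot_mvle_right _ _) (mvle_mvsup_left _ _)
  have hw_le : mvle (odot (mvsup u v) w) (mvsup u (odot v w)) := by
    refine mvle_trans (odot_mvsup_mvle w u v) (mvsup_mvle ?_ ?_)
    · exact mvle_trans (odot_mvle_right w u) (mvle_mvsup_left _ _)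
    · rw [odot_comm w v]; exact mvle_mvsup_right _ _
  have hend := mvle_trans hstart (mvsup_mvle hu_le hw_le)
  rw [hv, hw, odot_top] at hend
  exact eq_top_of_top_mvle hend

end Prelinearity

section Powers

def mvpow (a : A) : ℕ → A
  | 0 => top
  | n + 1 => odot a (mvpow a n)

lemma mvpow_one (a : A) : mvpow a 1 = a := odot_top a

lemma mvpow_add (a : A) (m n : ℕ) : mvpow a (m + n) = odot (mvpow a m) (mvpow a n) := by
  induction m with
  | zero => rw [Nat.zero_add, mvpow, top_odot]
  | succ k ih => rw [Nat.add_right_comm, mvpow, ih, mvpow, odot_assoc]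

lemma mvpow_top (n : ℕ) : mvpow (top : A) n = top := by
  induction n with
  | zero => rfl
  | succ k ih => rw [mvpow, ih, odot_top]

lemma mvsup_mvpow_right_eq_top {u v : A} (h : mvsup u v = top) (n : ℕ) :
    mvsup u (mvpow v n) = top := by
  induction n with
  | zero => exact eq_top_of_top_mvle (mvle_mvsup_right u top)
  | succ k ih => exact mvsup_odot_eq_top h ih

lemma mvsup_mvpow_mvpow_eq_top {u v : A} (h : mvsup u v = top) (m n : ℕ) :
    mvsup (mvpow u m) (mvpow v n) = top := by
  have hv := mvsup_mvpow_right_eq_top h n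
  rw [mvsup_comm] at hv ⊢
  exact mvsup_mvpow_right_eq_top hv m

end Powers

section PrincipalFilter

/-- The filter generated by `b`. -/
def principalFilter (b : A) : Set A := {x | ∃ n : ℕ, mvle (mvpow b n) x}

lemma isFilter_principalFilter (b : A) : IsFilter (principalFilter b) where
  top_mem := ⟨0, mvle_top _⟩
  mp := by
    rintro a c ⟨n, hn⟩ ⟨m, hm⟩
    refine ⟨n + m, mvle_trans ?_ (mvinf_mvle_right a c)⟩
    rw [mvpow_add]
    exact mvle_trans (odot_mvle_odot_left hn _) (odot_mvle_odot_right hm a)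

lemma principalFilter_ne_singleton_top {b : A} (hb : b ≠ top) : principalFilter b ≠ {top} := by
  intro heq
  have hmem : b ∈ principalFilter b := ⟨1, by rw [mvpow_one]; exact mvle_refl b⟩
  rw [heq] at hmem
  exact hb hmem

lemma eq_top_of_mem_principalFilter_of_mvsup_eq_top {b c x : A} (hbc : mvsup b c = top)
    (hb : x ∈ principalFilter b) (hc : x ∈ principalFilter c) : x = top := by
  obtain ⟨m, hm⟩ := hb
  obtain ⟨n, hn⟩ := hc
  apply eq_top_of_top_mvle
  rw [← mvsup_mvpow_mvpow_eq_top hbc m n]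
  exact mvsup_mvle hm hn

end PrincipalFilter

namespace IsSMMV

variable {τ : A → A} (h : IsSMMV τ)
include h

lemma map_zero : τ (0 : A) = 0 := by
  rw [← mvneg_top, h.1.map_neg, h.1.map_top, mvneg_top]

lemma map_idem (x : A) : τ (τ x) = τ x := by
  simpa only [h.map_zero, oplus_zero] using h.1.tau_fix x 0

lemma map_imp (x y : A) : τ (imp x y) = imp (τ x) (τ y) := by
  rw [imp, imp, h.2, h.1.map_neg]

lemma mvle_map {x y : A} (hxy : mvle x y) : mvle (τ x) (τ y) := by
  rw [mvle, ← h.map_imp, hxy, h.1.map_top]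

lemma map_mvpow (b : A) (n : ℕ) : τ (mvpow b n) = mvpow (τ b) n := by
  induction n with
  | zero => exact h.1.map_top
  | succ k ih => rw [mvpow, mvpow, odot, h.1.map_neg, h.2, h.1.map_neg, h.1.map_neg, ih, odot]

lemma imp_mem_tauKernel {x y : A} (hxy : τ x = τ y) : imp x y ∈ tauKernel τ := by
  rw [tauKernel, Set.mem_ofPred_eq, h.map_imp, hxy]
  exact mvle_refl _

lemma isTauFilter_principalFilter {b : A} (hb : b ∈ tauKernel τ) :
    IsTauFilter τ (principalFilter b) := by
  refine ⟨isFilter_principalFilter b, fun x ⟨n, hn⟩ => ⟨0, ?_⟩⟩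
  have hx := h.mvle_map hn
  rw [h.map_mvpow, hb, mvpow_top] at hx
  rw [eq_top_of_top_mvle hx]
  exact mvle_top _

end IsSMMV

lemma SubdirIrrSMV.eq_top_or_eq_top_of_mvsup_eq_top {τ : A → A} (hsi : SubdirIrrSMV τ)
    (h : IsSMMV τ) {b c : A} (hb : b ∈ tauKernel τ) (hc : c ∈ tauKernel τ)
    (hbc : mvsup b c = top) : b = top ∨ c = top := by
  by_contra! hne
  obtain ⟨F, hF, hF_ne, hF_min⟩ := hsi
  have hFb := hF_min _ (h.isTauFilter_principalFilter hb) (principalFilter_ne_singleton_top hne.1)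
  have hFc := hF_min _ (h.isTauFilter_principalFilter hc) (principalFilter_ne_singleton_top hne.2)
  exact hF_ne (Set.eq_singleton_iff_unique_mem.mpr ⟨hF.1.top_mem,
    fun x hx => eq_top_of_mem_principalFilter_of_mvsup_eq_top hbc (hFb hx) (hFc hx)⟩)

end MV

/-- In a subdirectly irreducible SMMV-algebra, every element is
comparable with its image under `τ`. -/
theorem comparable_with_tau {A : Type*} [MV A] (τ : A → A)
    (h : IsSMMV τ) (hsi : SubdirIrrSMV τ) (a : A) :
    mvle a (τ a) ∨ mvle (τ a) a :=
  hsi.eq_top_or_eq_top_of_mvsup_eq_top h (h.imp_mem_tauKernel (h.map_idem a).symm)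
    (h.imp_mem_tauKernel (h.map_idem a)) (mvsup_imp_imp a (τ a))
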